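/- arXiv:2208.00868 — 4 statements merged into one kernel-verified Lean document; each statement's English description precedes it below -/
import Mathlib

section
/- Let U1, U2 be Banach spaces, Λ a normed vector space, ℱ: Λ × U1 → U2 with ℱ(λ0,u0)=0. Assume ℱ(·,u) is continuous for each u, ℱ(λ,·) is C² for each λ, and there exist ε0>0, c>0 such that for all λ,u with ‖λ−λ0‖+‖u−u0‖<ε0: ∂ᵤℱ(λ,u0) is Fredholm of index zero, ‖v‖ ≤ c‖∂ᵤℱ(λ,u0)v‖ for all v, and ‖∂ᵤ²ℱ(λ,u)(v,w)‖ ≤ c‖v‖‖w‖ for all v,w. Then there exist ε∈(0,ε0) and δ>0 such that for every λ with ‖λ−λ0‖<ε there is a unique u with ‖u−u0‖<δ and ℱ(λ,u)=0, and the data-to-solution map λ ↦ u is continuous. -/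
/-- A bounded linear operator is Fredholm of index zero: finite-dimensional kernel,
closed range, finite-dimensional cokernel, and `dim ker = codim range`. -/
def IsFredholmIdxZero {U V : Type*} [NormedAddCommGroup U] [NormedSpace ℝ U]
    [NormedAddCommGroup V] [NormedSpace ℝ V] (A : U →L[ℝ] V) : Prop :=
  FiniteDimensional ℝ (LinearMap.ker (A : U →ₗ[ℝ] V)) ∧
  IsClosed (LinearMap.range (A : U →ₗ[ℝ] V) : Set V) ∧
  FiniteDimensional ℝ (V ⧸ LinearMap.range (A : U →ₗ[ℝ] V)) ∧
  Module.finrank ℝ (LinearMap.ker (A : U →ₗ[ℝ] V)) = Module.finrank ℝ (V ⧸ LinearMap.range (A : U →ₗ[ℝ] V))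

theorem stmt0
    {Λ U1 U2 : Type*} [NormedAddCommGroup Λ] [NormedSpace ℝ Λ]
    [NormedAddCommGroup U1] [NormedSpace ℝ U1] [CompleteSpace U1]
    [NormedAddCommGroup U2] [NormedSpace ℝ U2] [CompleteSpace U2]
    (F : Λ → U1 → U2) (lam0 : Λ) (u0 : U1)
    (DF : Λ → U1 → (U1 →L[ℝ] U2)) (D2F : Λ → U1 → (U1 →L[ℝ] U1 →L[ℝ] U2))
    (hF0 : F lam0 u0 = 0)
    (hcont : ∀ u : U1, Continuous fun l : Λ => F l u)
    (hC2 : ∀ l : Λ, ContDiff ℝ 2 (F l))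
    (hDF : ∀ (l : Λ) (u : U1), HasFDerivAt (F l) (DF l u) u)
    (hD2F : ∀ (l : Λ) (u : U1), HasFDerivAt (DF l) (D2F l u) u)
    (ε0 c : ℝ) (hε0 : 0 < ε0) (hc : 0 < c)
    (hFred : ∀ l : Λ, ‖l - lam0‖ < ε0 → IsFredholmIdxZero (DF l u0))
    (hlow : ∀ l : Λ, ‖l - lam0‖ < ε0 → ∀ v : U1, ‖v‖ ≤ c * ‖DF l u0 v‖)
    (hbound : ∀ (l : Λ) (u : U1), ‖l - lam0‖ + ‖u - u0‖ < ε0 →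
      ∀ v w : U1, ‖D2F l u v w‖ ≤ c * ‖v‖ * ‖w‖) :
    ∃ ε δ : ℝ, 0 < ε ∧ ε < ε0 ∧ 0 < δ ∧
      ∃ uhat : Λ → U1,
        (∀ l : Λ, ‖l - lam0‖ < ε →
          (‖uhat l - u0‖ < δ ∧ F l (uhat l) = 0 ∧
            ∀ u : U1, ‖u - u0‖ < δ → F l u = 0 → u = uhat l)) ∧
        ContinuousOn uhat {l : Λ | ‖l - lam0‖ < ε} := by
  classical
  -- Step 1: invert DF l u0
  have hinv : ∀ l : Λ, ∃ B : U2 →L[ℝ] U1, ‖l - lam0‖ < ε0 →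
      ((∀ v, B (DF l u0 v) = v) ∧ (∀ w, DF l u0 (B w) = w) ∧ (∀ w, ‖B w‖ ≤ c * ‖w‖)) := by
    intro l
    by_cases hl : ‖l - lam0‖ < ε0
    · have hker : LinearMap.ker (DF l u0 : U1 →ₗ[ℝ] U2) = ⊥ := by
        rw [LinearMap.ker_eq_bot']
        intro v hv
        have h1 := hlow l hl v
        rw [show (DF l u0) v = 0 from hv] at h1
        simp only [norm_zero, mul_zero] at h1
        exact norm_le_zero_iff.mp h1
      obtain ⟨hfin, hclosed, hfincok, hrank⟩ := hFred l hl
      have hker0 : Module.finrank ℝ (LinearMap.ker (DF l u0 : U1 →ₗ[ℝ] U2)) = 0 := by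
        rw [hker]; exact finrank_bot ℝ U1
      have hcok0 : Module.finrank ℝ (U2 ⧸ LinearMap.range (DF l u0 : U1 →ₗ[ℝ] U2)) = 0 := by
        rw [← hrank]; exact hker0
      have hsub : Subsingleton (U2 ⧸ LinearMap.range (DF l u0 : U1 →ₗ[ℝ] U2)) :=
        Module.finrank_zero_iff.mp hcok0
      have hrange : LinearMap.range (DF l u0 : U1 →ₗ[ℝ] U2) = ⊤ :=
        Submodule.unique_quotient_iff_eq_top.mp ⟨@uniqueOfSubsingleton _ hsub 0⟩
      let E := ContinuousLinearEquiv.ofBijective (DF l u0) hker hrange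
      refine ⟨(E.symm : U2 →L[ℝ] U1), fun _ => ⟨?_, ?_, ?_⟩⟩
      · intro v
        exact E.symm_apply_apply v
      · intro w
        exact E.apply_symm_apply w
      · intro w
        calc ‖E.symm w‖ ≤ c * ‖DF l u0 (E.symm w)‖ := hlow l hl _
          _ = c * ‖w‖ := by rw [show (DF l u0) (E.symm w) = w from E.apply_symm_apply w]
    · exact ⟨0, fun h => absurd h hl⟩
  choose Binv hBinv using hinv
  -- Step 2: constants
  set δ : ℝ := min (1/(2*c^2)) (ε0/4) with hδdef
  have hδpos : 0 < δ := lt_min (by positivity) (by positivity)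
  have hδ1 : c^2 * δ ≤ 1/2 := by
    have h1 : δ ≤ 1/(2*c^2) := min_le_left _ _
    calc c^2 * δ ≤ c^2 * (1/(2*c^2)) := by nlinarith
      _ = 1/2 := by field_simp
  have hδ2 : δ ≤ ε0/4 := min_le_right _ _
  have hc2 : 0 < δ/(2*c) := by positivity
  have hcontAt : ContinuousAt (fun l => F l u0) lam0 := (hcont u0).continuousAt
  rw [Metric.continuousAt_iff] at hcontAt
  obtain ⟨ε1, hε1pos, hε1⟩ := hcontAt (δ/(2*c)) hc2
  set ε : ℝ := min ε1 (ε0/2) with hεdef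
  have hεpos : 0 < ε := lt_min hε1pos (by positivity)
  have hεlt : ε < ε0 := lt_of_le_of_lt (min_le_right _ _) (by linarith)
  have hsmall : ∀ l : Λ, ‖l - lam0‖ < ε → ‖l - lam0‖ < ε0 := fun l hl => lt_trans hl hεlt
  have hεδ : ∀ l : Λ, ‖l - lam0‖ < ε → ∀ x : U1, ‖x - u0‖ ≤ δ →
      ‖l - lam0‖ + ‖x - u0‖ < ε0 := by
    intro l hl x hx
    have h1 : ‖l - lam0‖ < ε0/2 := lt_of_lt_of_le hl (min_le_right _ _)
    linarith
  have hFu0 : ∀ l : Λ, ‖l - lam0‖ < ε → c * ‖F l u0‖ < δ/2 := by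
    intro l hl
    have h1 : dist l lam0 < ε1 := by
      rw [dist_eq_norm]; exact lt_of_lt_of_le hl (min_le_left _ _)
    have h2 := hε1 h1
    rw [dist_eq_norm, hF0, sub_zero] at h2
    calc c * ‖F l u0‖ < c * (δ/(2*c)) := by
          exact mul_lt_mul_of_pos_left h2 hc
      _ = δ/2 := by field_simp
  -- Step 3: Lipschitz estimate for DF l · near u0
  have hDFlip : ∀ (l : Λ) (x : U1), ‖l - lam0‖ + ‖x - u0‖ < ε0 →
      ‖DF l x - DF l u0‖ ≤ c * ‖x - u0‖ := by
    intro l x hx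
    set s := Metric.closedBall u0 ‖x - u0‖ with hs
    have hmem : ∀ y ∈ s, ‖l - lam0‖ + ‖y - u0‖ < ε0 := by
      intro y hy
      have h1 : ‖y - u0‖ ≤ ‖x - u0‖ := by
        simpa [hs, Metric.mem_closedBall, dist_eq_norm] using hy
      linarith
    have h1 : ∀ y ∈ s, HasFDerivWithinAt (DF l) (D2F l y) s y :=
      fun y _ => (hD2F l y).hasFDerivWithinAt
    have h2 : ∀ y ∈ s, ‖D2F l y‖ ≤ c := by
      intro y hy
      refine ContinuousLinearMap.opNorm_le_bound _ hc.le (fun v => ?_)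
      refine ContinuousLinearMap.opNorm_le_bound _ (by positivity) (fun w => ?_)
      calc ‖D2F l y v w‖ ≤ c * ‖v‖ * ‖w‖ := hbound l y (hmem y hy) v w
        _ = c * ‖v‖ * ‖w‖ := rfl
    have hxs : x ∈ s := by
      simp [hs, Metric.mem_closedBall, dist_eq_norm]
    have hu0s : u0 ∈ s := Metric.mem_closedBall_self (norm_nonneg _)
    exact Convex.norm_image_sub_le_of_norm_hasFDerivWithin_le h1 h2
      (convex_closedBall _ _) hu0s hxs
  -- Step 4: Taylor-type estimate
  have hTay : ∀ l : Λ, ‖l - lam0‖ < ε → ∀ u ∈ Metric.closedBall u0 δ,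
      ∀ v ∈ Metric.closedBall u0 δ,
      ‖(F l u - DF l u0 u) - (F l v - DF l u0 v)‖ ≤ (c * δ) * ‖u - v‖ := by
    intro l hl u hu v hv
    have h1 : ∀ y ∈ Metric.closedBall u0 δ,
        HasFDerivWithinAt (fun x => F l x - DF l u0 x)
          ((fun y => DF l y - DF l u0) y) (Metric.closedBall u0 δ) y :=
      fun y _ => ((hDF l y).sub (DF l u0).hasFDerivAt).hasFDerivWithinAt
    have h2 : ∀ y ∈ Metric.closedBall u0 δ, ‖(fun y => DF l y - DF l u0) y‖ ≤ c * δ := by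
      intro y hy
      have hy' : ‖y - u0‖ ≤ δ := by
        simpa [Metric.mem_closedBall, dist_eq_norm] using hy
      have h3 := hDFlip l y (hεδ l hl y hy')
      calc ‖DF l y - DF l u0‖ ≤ c * ‖y - u0‖ := h3
        _ ≤ c * δ := by nlinarith
    exact Convex.norm_image_sub_le_of_norm_hasFDerivWithin_le h1 h2
      (convex_closedBall _ _) hv hu
  -- Step 5: the fixed point map g and its contraction property
  set g : Λ → U1 → U1 := fun l u => u - Binv l (F l u) with hg
  have hcontr : ∀ l : Λ, ‖l - lam0‖ < ε → ∀ u ∈ Metric.closedBall u0 δ,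
      ∀ v ∈ Metric.closedBall u0 δ, ‖g l u - g l v‖ ≤ (1/2) * ‖u - v‖ := by
    intro l hl u hu v hv
    obtain ⟨hB1, hB2, hB3⟩ := hBinv l (hsmall l hl)
    have key : g l u - g l v = Binv l ((F l v - DF l u0 v) - (F l u - DF l u0 u)) := by
      simp only [hg, map_sub, hB1]
      abel
    rw [key]
    calc ‖Binv l ((F l v - DF l u0 v) - (F l u - DF l u0 u))‖
        ≤ c * ‖(F l v - DF l u0 v) - (F l u - DF l u0 u)‖ := hB3 _
      _ ≤ c * ((c * δ) * ‖v - u‖) := by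
          have := hTay l hl v hv u hu
          nlinarith [norm_nonneg ((F l v - DF l u0 v) - (F l u - DF l u0 u))]
      _ = (c^2 * δ) * ‖u - v‖ := by rw [norm_sub_rev]; ring
      _ ≤ (1/2) * ‖u - v‖ := mul_le_mul_of_nonneg_right hδ1 (norm_nonneg _)
  have hgu0 : ∀ l : Λ, ‖l - lam0‖ < ε → ‖g l u0 - u0‖ ≤ c * ‖F l u0‖ := by
    intro l hl
    obtain ⟨hB1, hB2, hB3⟩ := hBinv l (hsmall l hl)
    have : g l u0 - u0 = -(Binv l (F l u0)) := by simp [hg]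
    rw [this, norm_neg]
    exact hB3 _
  have hu0mem : u0 ∈ Metric.closedBall u0 δ := Metric.mem_closedBall_self hδpos.le
  have hself : ∀ l : Λ, ‖l - lam0‖ < ε → ∀ u ∈ Metric.closedBall u0 δ,
      g l u ∈ Metric.closedBall u0 δ := by
    intro l hl u hu
    have hu' : ‖u - u0‖ ≤ δ := by simpa [Metric.mem_closedBall, dist_eq_norm] using hu
    have h1 : ‖g l u - u0‖ ≤ ‖g l u - g l u0‖ + ‖g l u0 - u0‖ := by
      have := dist_triangle (g l u) (g l u0) u0
      simpa [dist_eq_norm] using this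
    have h2 := hcontr l hl u hu u0 hu0mem
    have h3 := hgu0 l hl
    have h4 := hFu0 l hl
    simp only [Metric.mem_closedBall, dist_eq_norm]
    linarith
  -- Step 6: existence of a fixed point
  have hexists : ∀ l : Λ, ‖l - lam0‖ < ε →
      ∃ u : U1, u ∈ Metric.closedBall u0 δ ∧ F l u = 0 := by
    intro l hl
    obtain ⟨hB1, hB2, hB3⟩ := hBinv l (hsmall l hl)
    haveI : CompleteSpace (Metric.closedBall u0 δ) :=
      Metric.isClosed_closedBall.completeSpace_coe
    haveI : Nonempty (Metric.closedBall u0 δ) := ⟨⟨u0, hu0mem⟩⟩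
    set f : Metric.closedBall u0 δ → Metric.closedBall u0 δ :=
      fun x => ⟨g l x.1, hself l hl x.1 x.2⟩ with hf
    have hlip : LipschitzWith (1/2 : NNReal) f := by
      apply LipschitzWith.of_dist_le_mul
      intro x y
      have h1 := hcontr l hl x.1 x.2 y.1 y.2
      have h2 : ((1/2 : NNReal) : ℝ) = 1/2 := by norm_num
      rw [Subtype.dist_eq, Subtype.dist_eq, dist_eq_norm, dist_eq_norm, h2]
      exact h1
    have hcw : ContractingWith (1/2 : NNReal) f := by
      constructor
      · rw [show (1 : NNReal) = ((1:ℝ).toNNReal) by simp]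
        rw [← NNReal.coe_lt_coe]
        norm_num
      · exact hlip
    set x := hcw.fixedPoint f with hx
    have hfix : f x = x := hcw.fixedPoint_isFixedPt
    have hfix1 : g l x.1 = x.1 := congrArg Subtype.val hfix
    have hB0 : Binv l (F l x.1) = 0 := by
      have h1 : x.1 - Binv l (F l x.1) = x.1 := hfix1
      have := sub_eq_self.mp h1
      exact this
    refine ⟨x.1, x.2, ?_⟩
    have : F l x.1 = DF l u0 (Binv l (F l x.1)) := (hB2 _).symm
    rw [hB0, map_zero] at this
    exact this
  -- Step 7: existence + uniqueness
  have hkey : ∀ l : Λ, ‖l - lam0‖ < ε → ∃ u : U1,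
      (‖u - u0‖ < δ ∧ F l u = 0) ∧ ∀ u' : U1, ‖u' - u0‖ ≤ δ → F l u' = 0 → u' = u := by
    intro l hl
    obtain ⟨hB1, hB2, hB3⟩ := hBinv l (hsmall l hl)
    obtain ⟨u, hu, hFu⟩ := hexists l hl
    have hu' : ‖u - u0‖ ≤ δ := by simpa [Metric.mem_closedBall, dist_eq_norm] using hu
    have hfixu : g l u = u := by simp [hg, hFu]
    have h1 : ‖u - u0‖ ≤ ‖g l u - g l u0‖ + ‖g l u0 - u0‖ := by
      have := dist_triangle (g l u) (g l u0) u0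
      rw [hfixu] at this ⊢
      simpa [dist_eq_norm] using this
    have h2 := hcontr l hl u hu u0 hu0mem
    have h3 := hgu0 l hl
    have h4 := hFu0 l hl
    have hstrict : ‖u - u0‖ < δ := by linarith
    refine ⟨u, ⟨hstrict, hFu⟩, ?_⟩
    intro u' hud hFu'
    have hu'mem : u' ∈ Metric.closedBall u0 δ := by
      simpa [Metric.mem_closedBall, dist_eq_norm] using hud
    have hfixu' : g l u' = u' := by simp [hg, hFu']
    have h5 : ‖u' - u‖ ≤ (1/2) * ‖u' - u‖ := by
      have := hcontr l hl u' hu'mem u hu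
      rw [hfixu', hfixu] at this
      exact this
    have h6 : ‖u' - u‖ = 0 := by linarith [norm_nonneg (u' - u)]
    exact sub_eq_zero.mp (norm_eq_zero.mp h6)
  -- Step 8: define uhat and conclude
  obtain ⟨uhat, huhat⟩ : ∃ uhat : Λ → U1, ∀ (l : Λ) (hl : ‖l - lam0‖ < ε),
      (‖uhat l - u0‖ < δ ∧ F l (uhat l) = 0) ∧
        ∀ u' : U1, ‖u' - u0‖ ≤ δ → F l u' = 0 → u' = uhat l := by
    choose f hf using hkey
    refine ⟨fun l => if h : ‖l - lam0‖ < ε then f l h else u0, fun l hl => ?_⟩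
    simp only [dif_pos hl]
    exact hf l hl
  refine ⟨ε, δ, hεpos, hεlt, hδpos, uhat, ?_, ?_⟩
  · intro l hl
    obtain ⟨⟨h1, h2⟩, h3⟩ := huhat l hl
    exact ⟨h1, h2, fun u hu hFu => h3 u hu.le hFu⟩
  · -- continuity
    have hdist : ∀ l μ : Λ, ‖l - lam0‖ < ε → ‖μ - lam0‖ < ε →
        ‖uhat l - uhat μ‖ ≤ 2 * c * ‖F l (uhat μ)‖ := by
      intro l μ hl hμ
      obtain ⟨hB1, hB2, hB3⟩ := hBinv l (hsmall l hl)
      obtain ⟨⟨hl1, hl2⟩, _⟩ := huhat l hl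
      obtain ⟨⟨hμ1, hμ2⟩, _⟩ := huhat μ hμ
      have hlm : uhat l ∈ Metric.closedBall u0 δ := by
        simpa [Metric.mem_closedBall, dist_eq_norm] using hl1.le
      have hμm : uhat μ ∈ Metric.closedBall u0 δ := by
        simpa [Metric.mem_closedBall, dist_eq_norm] using hμ1.le
      have hfixl : g l (uhat l) = uhat l := by simp [hg, hl2]
      have htri : ‖uhat l - uhat μ‖ ≤ ‖g l (uhat l) - g l (uhat μ)‖ + ‖g l (uhat μ) - uhat μ‖ := by
        have := dist_triangle (g l (uhat l)) (g l (uhat μ)) (uhat μ)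
        rw [hfixl] at this ⊢
        simpa [dist_eq_norm] using this
      have h1 := hcontr l hl (uhat l) hlm (uhat μ) hμm
      have h2 : ‖g l (uhat μ) - uhat μ‖ ≤ c * ‖F l (uhat μ)‖ := by
        have : g l (uhat μ) - uhat μ = -(Binv l (F l (uhat μ))) := by simp [hg]
        rw [this, norm_neg]
        exact hB3 _
      linarith
    intro μ hμ
    have hμ' : ‖μ - lam0‖ < ε := hμ
    have hFμ : F μ (uhat μ) = 0 := (huhat μ hμ').1.2
    have htend : Filter.Tendsto (fun l => 2 * c * ‖F l (uhat μ)‖)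
        (nhdsWithin μ {l : Λ | ‖l - lam0‖ < ε}) (nhds 0) := by
      have h1 : Filter.Tendsto (fun l => F l (uhat μ))
          (nhdsWithin μ {l : Λ | ‖l - lam0‖ < ε}) (nhds (F μ (uhat μ))) :=
        ((hcont (uhat μ)).tendsto μ).mono_left nhdsWithin_le_nhds
      have h2 := (h1.norm).const_mul (2 * c)
      simpa [hFμ] using h2
    have hsq : Filter.Tendsto (fun l => ‖uhat l - uhat μ‖)
        (nhdsWithin μ {l : Λ | ‖l - lam0‖ < ε}) (nhds 0) := by
      apply squeeze_zero' (Filter.Eventually.of_forall (fun l => norm_nonneg _)) ?_ htend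
      filter_upwards [self_mem_nhdsWithin] with l hl
      exact hdist l μ hl hμ'
    have : Filter.Tendsto uhat (nhdsWithin μ {l : Λ | ‖l - lam0‖ < ε}) (nhds (uhat μ)) := by
      rw [tendsto_iff_dist_tendsto_zero]
      simpa [dist_eq_norm] using hsq
    exact this
end

section
/- Let U be a Banach space and K : U → U a bounded linear operator such that K² is compact. Then I − K is a Fredholm operator of index zero. -/
section NikolskiiAux

set_option linter.unusedSectionVars false
set_option maxHeartbeats 1000000
open LinearMap Metric Set Filter Module

variable {U : Type*} [NormedAddCommGroup U] [NormedSpace ℝ U] [CompleteSpace U]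

/-- kernel of `1 - D` is finite dimensional for compact `D`. -/
lemma ker_fd_of_compact (D : U →L[ℝ] U) (hD : IsCompactOperator ⇑D) :
    FiniteDimensional ℝ (LinearMap.ker ((1 - D : U →L[ℝ] U) : U →ₗ[ℝ] U)) := by
  set N := LinearMap.ker ((1 - D : U →L[ℝ] U) : U →ₗ[ℝ] U)
  have hNfix : ∀ x ∈ N, D x = x := by
    intro x hx
    have : (1 - D) x = 0 := hx
    have h2 : x - D x = 0 := by simpa [ContinuousLinearMap.sub_apply] using this
    have := sub_eq_zero.mp h2
    exact this.symm
  set S : Set U := (N : Set U) ∩ closedBall (0 : U) 1 with hS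
  have hKc : IsCompact (closure (⇑D '' closedBall (0:U) 1)) :=
    hD.isCompact_closure_image_closedBall (𝕜₁ := ℝ) 1
  have hSsub : S ⊆ closure (⇑D '' closedBall (0:U) 1) := by
    rintro x ⟨hx1, hx2⟩
    exact subset_closure ⟨x, hx2, hNfix x hx1⟩
  have hSclosed : IsClosed S :=
    (ContinuousLinearMap.isClosed_ker (1 - D)).inter Metric.isClosed_closedBall
  have hScompact : IsCompact S := hKc.of_isClosed_subset hSclosed hSsub
  have hball : (Subtype.val '' (closedBall (0 : N) 1)) = S := by
    ext x
    constructor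
    · rintro ⟨y, hy, rfl⟩
      refine ⟨y.2, ?_⟩
      simpa [mem_closedBall, dist_eq_norm] using
        (by simpa [mem_closedBall, dist_eq_norm] using hy : ‖y‖ ≤ 1)
    · rintro ⟨hx1, hx2⟩
      exact ⟨⟨x, hx1⟩, by simpa [mem_closedBall, dist_eq_norm] using
        (by simpa [mem_closedBall, dist_eq_norm] using hx2 : ‖x‖ ≤ 1), rfl⟩
  have hcb : IsCompact (closedBall (0 : N) 1) := by
    rw [Topology.IsEmbedding.subtypeVal.isCompact_iff, hball]
    exact hScompact
  exact FiniteDimensional.of_isCompact_closedBall₀ ℝ one_pos hcb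

/-- kernel of `1 - C` is finite dimensional when `C ^ 2` is compact. -/
lemma ker_fd_of_sq_compact (C : U →L[ℝ] U) (hC : IsCompactOperator ⇑(C * C)) :
    FiniteDimensional ℝ (LinearMap.ker ((1 - C : U →L[ℝ] U) : U →ₗ[ℝ] U)) := by
  have hle : LinearMap.ker ((1 - C : U →L[ℝ] U) : U →ₗ[ℝ] U) ≤ LinearMap.ker ((1 - C * C : U →L[ℝ] U) : U →ₗ[ℝ] U) := by
    intro x hx
    have h1 : C x = x := by
      have : x - C x = 0 := by
        simpa [ContinuousLinearMap.sub_apply] using (hx : (1 - C) x = 0)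
      exact (sub_eq_zero.mp this).symm
    have : x - C (C x) = 0 := by rw [h1, h1, sub_self]
    simpa [ContinuousLinearMap.sub_apply, ContinuousLinearMap.mul_apply] using this
  have := ker_fd_of_compact (C * C) hC
  exact Submodule.finiteDimensional_of_le hle

/-- bounded sequences have subsequences mapped to convergent ones by compact operators. -/
lemma exists_subseq_tendsto (D : U →L[ℝ] U) (hD : IsCompactOperator ⇑D)
    (x : ℕ → U) (hx : ∀ n, ‖x n‖ ≤ 1) :
    ∃ (v : U) (φ : ℕ → ℕ), StrictMono φ ∧ Tendsto (fun k => D (x (φ k))) atTop (nhds v) := by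
  have hKc : IsCompact (closure (⇑D '' closedBall (0:U) 1)) :=
    hD.isCompact_closure_image_closedBall (𝕜₁ := ℝ) 1
  have hmem : ∀ n, D (x n) ∈ closure (⇑D '' closedBall (0:U) 1) := fun n =>
    subset_closure ⟨x n, by simpa [mem_closedBall, dist_eq_norm] using hx n, rfl⟩
  obtain ⟨v, -, φ, hφ, hconv⟩ := hKc.tendsto_subseq hmem
  exact ⟨v, φ, hφ, hconv⟩

/-- A compact operator cannot map a bounded sequence to a uniformly separated one. -/
lemma no_separated_seq (D : U →L[ℝ] U) (hD : IsCompactOperator ⇑D)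
    (x : ℕ → U) (hx : ∀ n, ‖x n‖ ≤ 1)
    (hsep : ∀ m n, m < n → (1:ℝ)/2 ≤ ‖D (x n) - D (x m)‖) : False := by
  obtain ⟨v, φ, hφ, hconv⟩ := exists_subseq_tendsto D hD x hx
  have hcauchy : CauchySeq (fun k => D (x (φ k))) := hconv.cauchySeq
  rw [Metric.cauchySeq_iff] at hcauchy
  obtain ⟨N, hN⟩ := hcauchy (1/2) (by norm_num)
  have h1 := hN (N+1) (by omega) N (by omega)
  have h2 := hsep (φ N) (φ (N+1)) (hφ (by omega))
  rw [dist_eq_norm] at h1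
  linarith

/-- Riesz lemma, packaged: an almost-orthogonal unit vector in `p` relative to `q`. -/
lemma riesz_pkg (p q : Submodule ℝ U) (hq : IsClosed (q : Set U)) (hle : q ≤ p)
    (hne : ¬ p ≤ q) :
    ∃ x : U, x ∈ p ∧ ‖x‖ = 1 ∧ ∀ y ∈ q, (1:ℝ)/2 ≤ ‖x - y‖ := by
  set F : Submodule ℝ p := q.comap p.subtype with hF
  have hFc : IsClosed (F : Set p) := by
    have : (F : Set p) = Subtype.val ⁻¹' (q : Set U) := rfl
    rw [this]
    exact hq.preimage continuous_subtype_val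
  have hex : ∃ z : p, z ∉ F := by
    obtain ⟨z, hzp, hzq⟩ := SetLike.not_le_iff_exists.mp hne
    exact ⟨⟨z, hzp⟩, hzq⟩
  obtain ⟨x₀, hx₀F, hx₀⟩ := riesz_lemma hFc hex (show (1:ℝ)/2 < 1 by norm_num)
  have hx₀ne : (x₀ : U) ≠ 0 := by
    intro h
    apply hx₀F
    have : x₀ = 0 := Subtype.ext h
    rw [this]; exact F.zero_mem
  have hn : ‖(x₀ : U)‖ ≠ 0 := norm_ne_zero_iff.mpr hx₀ne
  refine ⟨‖(x₀ : U)‖⁻¹ • (x₀ : U), p.smul_mem _ x₀.2, ?_, ?_⟩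
  · simp [norm_smul, inv_mul_cancel₀ hn]
  · intro y hy
    have hyp : y ∈ p := hle hy
    set yh : p := ⟨y, hyp⟩ with hyh
    have hmemF : ‖(x₀ : U)‖ • yh ∈ F := by
      show ((‖(x₀ : U)‖ • yh : p) : U) ∈ q
      exact q.smul_mem _ hy
    have key := hx₀ (‖(x₀ : U)‖ • yh) hmemF
    have hnorm : ‖x₀ - ‖(x₀ : U)‖ • yh‖ = ‖(x₀ : U) - ‖(x₀ : U)‖ • y‖ := rfl
    rw [hnorm] at key
    have hpos : (0:ℝ) < ‖(x₀ : U)‖ := lt_of_le_of_ne (norm_nonneg _) (Ne.symm hn)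
    have hfac : (x₀ : U) - ‖(x₀ : U)‖ • y = ‖(x₀ : U)‖ • (‖(x₀ : U)‖⁻¹ • (x₀ : U) - y) := by
      rw [smul_sub, smul_smul, mul_inv_cancel₀ hn, one_smul]
    rw [hfac, norm_smul, Real.norm_eq_abs, abs_of_pos hpos] at key
    have hco : ‖x₀‖ = ‖(x₀ : U)‖ := rfl
    rw [hco] at key
    have := (mul_le_mul_iff_right₀ hpos).mp (by linarith only [key] : ‖(x₀ : U)‖ * (1/2) ≤ ‖(x₀:U)‖ * ‖‖(x₀ : U)‖⁻¹ • (x₀ : U) - y‖)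
    linarith only [this]

/-- range of `1 - C` is closed when `C ^ 2` is compact. -/
lemma range_closed_of_sq_compact (C : U →L[ℝ] U) (hC : IsCompactOperator ⇑(C * C)) :
    IsClosed (LinearMap.range ((1 - C : U →L[ℝ] U) : U →ₗ[ℝ] U) : Set U) := by
  haveI hN : FiniteDimensional ℝ (LinearMap.ker ((1 - C : U →L[ℝ] U) : U →ₗ[ℝ] U)) := ker_fd_of_sq_compact C hC
  set N := LinearMap.ker ((1 - C : U →L[ℝ] U) : U →ₗ[ℝ] U) with hNdef
  have hcc : N.ClosedComplemented := Submodule.ClosedComplemented.of_finiteDimensional N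
  obtain ⟨hNc, M, hMc, hcompl⟩ :=
    (Submodule.closedComplemented_iff_isClosed_exists_isClosed_isCompl).mp hcc
  -- the key coercivity bound on M
  have hbound : ∃ c : ℝ, 0 < c ∧ ∀ u ∈ M, ‖u‖ ≤ c * ‖(1 - C) u‖ := by
    by_contra hcon
    push_neg at hcon
    have hsel : ∀ n : ℕ, ∃ u, u ∈ M ∧ ((n : ℝ) + 1) * ‖(1 - C) u‖ < ‖u‖ := by
      intro n
      obtain ⟨u, hu, hlt⟩ := hcon ((n : ℝ) + 1) (by positivity)
      exact ⟨u, hu, hlt⟩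
    choose u hu hlt using hsel
    have hune : ∀ n, u n ≠ 0 := by
      intro n h
      have h1 := hlt n
      rw [h] at h1
      simp only [map_zero, norm_zero, mul_zero] at h1
      exact lt_irrefl _ h1
    set x : ℕ → U := fun n => ‖u n‖⁻¹ • u n with hxdef
    have hxn : ∀ n, ‖x n‖ = 1 := by
      intro n
      have : ‖u n‖ ≠ 0 := norm_ne_zero_iff.mpr (hune n)
      simp [hxdef, norm_smul, inv_mul_cancel₀ this]
    have hxM : ∀ n, x n ∈ M := fun n => M.smul_mem _ (hu n)
    have hxsmall : ∀ n, ‖(1 - C) (x n)‖ ≤ 1 / ((n:ℝ)+1) := by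
      intro n
      have hnn : (0:ℝ) < ‖u n‖ := norm_pos_iff.mpr (hune n)
      have : ‖(1 - C) (x n)‖ = ‖u n‖⁻¹ * ‖(1 - C) (u n)‖ := by
        simp [hxdef, map_smul, norm_smul, abs_of_pos (inv_pos.mpr hnn)]
      have hpos : (0:ℝ) < (n:ℝ)+1 := by positivity
      have key : (((n:ℝ)+1)) * (‖u n‖⁻¹ * ‖(1 - C) (u n)‖) ≤ 1 := by
        have h4 := mul_le_mul_of_nonneg_left (hlt n).le (inv_nonneg.mpr hnn.le)
        calc ((n:ℝ)+1) * (‖u n‖⁻¹ * ‖(1 - C) (u n)‖)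
            = ‖u n‖⁻¹ * (((n:ℝ)+1) * ‖(1 - C) (u n)‖) := by ring
          _ ≤ ‖u n‖⁻¹ * ‖u n‖ := h4
          _ = 1 := inv_mul_cancel₀ (ne_of_gt hnn)
      rw [this, le_div_iff₀ hpos, mul_comm]
      exact key
    have htend0 : Tendsto (fun n => (1 - C) (x n)) atTop (nhds 0) := by
      rw [tendsto_zero_iff_norm_tendsto_zero]
      refine squeeze_zero (fun n => norm_nonneg _) hxsmall ?_
      exact tendsto_one_div_add_atTop_nhds_zero_nat
    obtain ⟨v, φ, hφ, hconv⟩ := exists_subseq_tendsto (C * C) hC x (fun n => (hxn n).le)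
    have hfact : ∀ w : U, w - (C * C) w = (1 + C) ((1 - C) w) := by
      intro w
      have : ((1 + C) * (1 - C)) w = (1 - C * C) w := by
        congr 1
        noncomm_ring
      simpa [ContinuousLinearMap.mul_apply, ContinuousLinearMap.sub_apply,
        ContinuousLinearMap.add_apply, ContinuousLinearMap.one_apply, sub_eq_iff_eq_add] using this.symm
    have htend0' : Tendsto (fun k => (1 - C) (x (φ k))) atTop (nhds 0) :=
      htend0.comp hφ.tendsto_atTop
    have hxconv : Tendsto (fun k => x (φ k)) atTop (nhds v) := by
      have h1' := ((1 + C).continuous.tendsto 0).comp htend0'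
      rw [map_zero] at h1'
      have heqf : (fun k => x (φ k) - (C * C) (x (φ k)))
          = fun k => (1 + C) ((1 - C) (x (φ k))) := funext fun k => hfact _
      have h1 : Tendsto (fun k => x (φ k) - (C * C) (x (φ k))) atTop (nhds 0) := by
        rw [heqf]; exact h1'
      have h2 : Tendsto (fun k => (x (φ k) - (C * C) (x (φ k))) + (C * C) (x (φ k)))
          atTop (nhds (0 + v)) := Tendsto.add h1 hconv
      simpa using h2
    have hvM : v ∈ M := hMc.mem_of_tendsto hxconv (Eventually.of_forall fun k => hxM (φ k))
    have hvnorm : ‖v‖ = 1 := by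
      have := ((continuous_norm.tendsto v).comp hxconv)
      have h2 : Tendsto (fun k => ‖x (φ k)‖) atTop (nhds 1) := by
        simpa [hxn] using tendsto_const_nhds (α := ℝ) (f := atTop (α := ℕ))
      exact tendsto_nhds_unique this h2
    have hvN : v ∈ N := by
      have h1 : Tendsto (fun k => (1 - C) (x (φ k))) atTop (nhds ((1 - C) v)) :=
        ((1 - C).continuous.tendsto v).comp hxconv
      have : (1 - C) v = 0 := tendsto_nhds_unique h1 htend0'
      exact this
    have : v = 0 := by
      have := hcompl.inf_eq_bot
      have hmem : v ∈ N ⊓ M := ⟨hvN, hvM⟩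
      rw [this] at hmem
      simpa using hmem
    rw [this] at hvnorm
    simp at hvnorm
  obtain ⟨c, hc, hcb⟩ := hbound
  haveI : CompleteSpace M := hMc.completeSpace_coe
  set g : M →L[ℝ] U := (1 - C).comp (M.subtypeL) with hg
  have hanti : AntilipschitzWith c.toNNReal ⇑g := by
    refine ContinuousLinearMap.antilipschitz_of_bound g ?_
    intro x
    have : ‖(x : U)‖ ≤ c * ‖(1 - C) (x : U)‖ := hcb x x.2
    simpa [hg, Real.coe_toNNReal c hc.le] using this
  have hclosed : IsClosed (Set.range ⇑g) := hanti.isClosed_range g.uniformContinuous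
  have heq : (LinearMap.range ((1 - C : U →L[ℝ] U) : U →ₗ[ℝ] U) : Set U) = Set.range ⇑g := by
    ext w
    constructor
    · rintro ⟨z, rfl⟩
      have hz : z ∈ N ⊔ M := by rw [hcompl.sup_eq_top]; trivial
      obtain ⟨a, ha, m, hm, rfl⟩ := Submodule.mem_sup.mp hz
      refine ⟨⟨m, hm⟩, ?_⟩
      have ha0 : (1 - C) a = 0 := ha
      change (1 - C) m = (1 - C) (a + m)
      rw [map_add, ha0, zero_add]
    · rintro ⟨z, rfl⟩
      exact ⟨z, rfl⟩
  rw [heq]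
  exact hclosed

/-- `1 - (1-K)^n` factors as `K * B` with `B` commuting with `K`. -/
lemma pow_factor (K : U →L[ℝ] U) (n : ℕ) :
    ∃ B : U →L[ℝ] U, Commute K B ∧ (1 - K) ^ n = 1 - K * B := by
  induction n with
  | zero => exact ⟨0, Commute.zero_right K, by simp⟩
  | succ n ih =>
    obtain ⟨B, hB, hfac⟩ := ih
    refine ⟨B * (1 - K) + 1, ?_, ?_⟩
    · exact ((hB.mul_right (Commute.sub_right (Commute.one_right K) rfl)).add_right
        (Commute.one_right K))
    · rw [pow_succ, hfac]
      have : K * (B * (1 - K) + 1) = K * B * (1 - K) + K := by noncomm_ring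
      rw [this]
      noncomm_ring

/-- Each power `(1-K)^n` is of the form `1 - C` with `C^2` compact. -/
lemma pow_form (K : U →L[ℝ] U) (hK2 : IsCompactOperator fun u => K (K u)) (n : ℕ) :
    ∃ C : U →L[ℝ] U, (1 - K) ^ n = 1 - C ∧ IsCompactOperator ⇑(C * C) := by
  obtain ⟨B, hB, hfac⟩ := pow_factor K n
  refine ⟨K * B, hfac, ?_⟩
  have hKK : IsCompactOperator ⇑(K * K) := by
    have : ⇑(K * K) = fun u => K (K u) := rfl
    rw [this]; exact hK2
  have heq : (K * B) * (K * B) = (K * K) * (B * B) := by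
    calc K * B * (K * B) = K * (B * K) * B := by noncomm_ring
      _ = K * (K * B) * B := by rw [hB.eq]
      _ = K * K * (B * B) := by noncomm_ring
  rw [heq]
  have : ⇑(K * K * (B * B)) = ⇑(K * K) ∘ ⇑(B * B) := rfl
  rw [this]
  exact hKK.comp_clm (B * B)

/-- kernels of powers are monotone. -/
lemma ker_pow_mono (T : U →L[ℝ] U) {m n : ℕ} (h : m ≤ n) :
    LinearMap.ker ((T ^ m : U →L[ℝ] U) : U →ₗ[ℝ] U) ≤ LinearMap.ker ((T ^ n : U →L[ℝ] U) : U →ₗ[ℝ] U) := by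
  intro x hx
  have : (T ^ n) x = (T ^ (n - m)) ((T ^ m) x) := by
    rw [← ContinuousLinearMap.mul_apply, ← pow_add]
    congr 2
    omega
  have hx0 : (T ^ m) x = 0 := hx
  simp only [LinearMap.mem_ker, ContinuousLinearMap.coe_coe]
  rw [this, hx0, map_zero]

/-- ranges of powers are antitone. -/
lemma range_pow_anti (T : U →L[ℝ] U) {m n : ℕ} (h : m ≤ n) :
    LinearMap.range ((T ^ n : U →L[ℝ] U) : U →ₗ[ℝ] U) ≤ LinearMap.range ((T ^ m : U →L[ℝ] U) : U →ₗ[ℝ] U) := by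
  rintro x ⟨y, rfl⟩
  refine ⟨(T ^ (n - m)) y, ?_⟩
  rw [ContinuousLinearMap.coe_coe, ContinuousLinearMap.coe_coe, ← ContinuousLinearMap.mul_apply, ← pow_add]
  congr 2
  omega

lemma commute_TS (K : U →L[ℝ] U) : Commute (1 - K) (1 + K) :=
  Commute.add_right (Commute.one_right (1 - K))
    (Commute.sub_left (Commute.one_left K) (Commute.refl K))

lemma D_apply (K : U →L[ℝ] U) (z : U) :
    (K * K) z = z - (1 - K) ((1 + K) z) := by
  have h : K * K = 1 - (1 - K) * (1 + K) := by noncomm_ring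
  rw [h]
  simp [ContinuousLinearMap.sub_apply, ContinuousLinearMap.mul_apply]

lemma TS_ker (K : U →L[ℝ] U) (k : ℕ) {z : U} (hz : z ∈ LinearMap.ker (((1 - K) ^ (k + 1) : U →L[ℝ] U) : U →ₗ[ℝ] U)) :
    (1 - K) ((1 + K) z) ∈ LinearMap.ker (((1 - K) ^ k : U →L[ℝ] U) : U →ₗ[ℝ] U) := by
  have hz0 : ((1 - K) ^ (k + 1)) z = 0 := hz
  have hc : ((1 - K) ^ (k + 1)) * (1 + K) = (1 + K) * ((1 - K) ^ (k + 1)) :=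
    ((commute_TS K).pow_left (k + 1)).eq
  show ((1 - K) ^ k) ((1 - K) ((1 + K) z)) = 0
  have : ((1 - K) ^ k) ((1 - K) ((1 + K) z)) = (((1 - K) ^ (k + 1)) * (1 + K)) z := by
    rw [show (1 - K) ^ (k+1) = (1 - K) ^ k * (1 - K) from pow_succ _ _]
    simp [ContinuousLinearMap.mul_apply]
  rw [this, hc]
  simp [ContinuousLinearMap.mul_apply, hz0]

lemma TS_range (K : U →L[ℝ] U) (k : ℕ) {z : U} (hz : z ∈ LinearMap.range (((1 - K) ^ k : U →L[ℝ] U) : U →ₗ[ℝ] U)) :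
    (1 - K) ((1 + K) z) ∈ LinearMap.range (((1 - K) ^ (k + 1) : U →L[ℝ] U) : U →ₗ[ℝ] U) := by
  obtain ⟨y, rfl⟩ := hz
  refine ⟨(1 + K) y, ?_⟩
  have hc : (1 + K) * ((1 - K) ^ k) = ((1 - K) ^ k) * (1 + K) :=
    ((commute_TS K).symm.pow_right k).eq
  calc ((1 - K) ^ (k + 1)) ((1 + K) y)
      = (1 - K) ((((1 - K) ^ k) * (1 + K)) y) := by
        rw [pow_succ']
        simp [ContinuousLinearMap.mul_apply]
    _ = (1 - K) ((1 + K) (((1 - K) ^ k) y)) := by rw [← hc]; simp [ContinuousLinearMap.mul_apply]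

/-- Ascent: the kernel chain of `1 - K` stabilizes. -/
lemma ascent (K : U →L[ℝ] U) (hK2 : IsCompactOperator fun u => K (K u)) :
    ∃ n, LinearMap.ker (((1 - K) ^ (n + 1) : U →L[ℝ] U) : U →ₗ[ℝ] U) ≤ LinearMap.ker (((1 - K) ^ n : U →L[ℝ] U) : U →ₗ[ℝ] U) := by
  by_contra hcon
  push_neg at hcon
  have hKK : IsCompactOperator ⇑(K * K) := hK2
  have hfd : ∀ n, FiniteDimensional ℝ (LinearMap.ker (((1 - K) ^ n : U →L[ℝ] U) : U →ₗ[ℝ] U)) := by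
    intro n
    obtain ⟨C, hfac, hC⟩ := pow_form K hK2 n
    rw [hfac]
    exact ker_fd_of_sq_compact C hC
  have hsel : ∀ n, ∃ x : U, x ∈ LinearMap.ker (((1 - K) ^ (n + 1) : U →L[ℝ] U) : U →ₗ[ℝ] U) ∧ ‖x‖ = 1 ∧
      ∀ y ∈ LinearMap.ker (((1 - K) ^ n : U →L[ℝ] U) : U →ₗ[ℝ] U), (1:ℝ)/2 ≤ ‖x - y‖ := by
    intro n
    haveI := hfd n
    exact riesz_pkg _ _ (LinearMap.ker (((1 - K) ^ n : U →L[ℝ] U) : U →ₗ[ℝ] U)).closed_of_finiteDimensional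
      (ker_pow_mono _ (Nat.le_succ n)) (hcon n)
  choose x hxk hxn hxd using hsel
  refine no_separated_seq (K * K) hKK x (fun n => (hxn n).le) ?_
  intro m n hmn
  set w : U := x m + (1 - K) ((1 + K) (x n)) - (1 - K) ((1 + K) (x m)) with hw
  have hwmem : w ∈ LinearMap.ker (((1 - K) ^ n : U →L[ℝ] U) : U →ₗ[ℝ] U) := by
    refine Submodule.sub_mem _ (Submodule.add_mem _ ?_ ?_) ?_
    · exact ker_pow_mono _ (by omega) (hxk m)
    · exact TS_ker K n (hxk n)
    · exact ker_pow_mono _ (by omega) (TS_ker K m (hxk m))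
  have heq : (K * K) (x n) - (K * K) (x m) = x n - w := by
    rw [D_apply, D_apply, hw]
    abel
  rw [heq]
  exact hxd n w hwmem

/-- Descent: the range chain of `1 - K` stabilizes. -/
lemma descent (K : U →L[ℝ] U) (hK2 : IsCompactOperator fun u => K (K u)) :
    ∃ n, LinearMap.range (((1 - K) ^ n : U →L[ℝ] U) : U →ₗ[ℝ] U) ≤ LinearMap.range (((1 - K) ^ (n + 1) : U →L[ℝ] U) : U →ₗ[ℝ] U) := by
  by_contra hcon
  push_neg at hcon
  have hKK : IsCompactOperator ⇑(K * K) := hK2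
  have hcl : ∀ n, IsClosed ((LinearMap.range (((1 - K) ^ n : U →L[ℝ] U) : U →ₗ[ℝ] U) : Submodule ℝ U) : Set U) := by
    intro n
    obtain ⟨C, hfac, hC⟩ := pow_form K hK2 n
    rw [hfac]
    exact range_closed_of_sq_compact C hC
  have hsel : ∀ n, ∃ x : U, x ∈ LinearMap.range (((1 - K) ^ n : U →L[ℝ] U) : U →ₗ[ℝ] U) ∧ ‖x‖ = 1 ∧
      ∀ y ∈ LinearMap.range (((1 - K) ^ (n + 1) : U →L[ℝ] U) : U →ₗ[ℝ] U), (1:ℝ)/2 ≤ ‖x - y‖ := by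
    intro n
    exact riesz_pkg _ _ (hcl (n + 1)) (range_pow_anti _ (Nat.le_succ n)) (hcon n)
  choose x hxk hxn hxd using hsel
  refine no_separated_seq (K * K) hKK x (fun n => (hxn n).le) ?_
  intro m n hmn
  rw [norm_sub_rev]
  set w : U := x n + (1 - K) ((1 + K) (x m)) - (1 - K) ((1 + K) (x n)) with hw
  have hwmem : w ∈ LinearMap.range (((1 - K) ^ (m + 1) : U →L[ℝ] U) : U →ₗ[ℝ] U) := by
    refine Submodule.sub_mem _ (Submodule.add_mem _ ?_ ?_) ?_
    · exact range_pow_anti _ (by omega) (hxk n)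
    · exact TS_range K m (hxk m)
    · exact range_pow_anti _ (by omega) (TS_range K n (hxk n))
  have heq : (K * K) (x m) - (K * K) (x n) = x m - w := by
    rw [D_apply, D_apply, hw]
    abel
  rw [heq]
  exact hxd m w hwmem

lemma ker_stab (T : U →L[ℝ] U) {n : ℕ}
    (h : LinearMap.ker ((T ^ (n + 1) : U →L[ℝ] U) : U →ₗ[ℝ] U) ≤ LinearMap.ker ((T ^ n : U →L[ℝ] U) : U →ₗ[ℝ] U)) {m k : ℕ}
    (hm : n ≤ m) (hk : m ≤ k) : LinearMap.ker ((T ^ k : U →L[ℝ] U) : U →ₗ[ℝ] U) ≤ LinearMap.ker ((T ^ m : U →L[ℝ] U) : U →ₗ[ℝ] U) := by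
  have step : ∀ m, n ≤ m → LinearMap.ker ((T ^ (m + 1) : U →L[ℝ] U) : U →ₗ[ℝ] U) ≤ LinearMap.ker ((T ^ m : U →L[ℝ] U) : U →ₗ[ℝ] U) := by
    intro m hm u hu
    have h1 : (T ^ (n + 1)) ((T ^ (m - n)) u) = 0 := by
      rw [← ContinuousLinearMap.mul_apply, ← pow_add]
      have : n + 1 + (m - n) = m + 1 := by omega
      rw [this]
      exact hu
    have h2 : (T ^ n) ((T ^ (m - n)) u) = 0 := h h1
    show (T ^ m) u = 0
    rw [← ContinuousLinearMap.mul_apply, ← pow_add] at h2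
    have : n + (m - n) = m := by omega
    rwa [this] at h2
  induction k with
  | zero =>
    have : m = 0 := by omega
    subst this; exact le_rfl
  | succ k ih =>
    rcases Nat.lt_or_ge m (k+1) with hlt | hge
    · exact le_trans (step k (by omega)) (ih (by omega))
    · have : m = k + 1 := by omega
      subst this; exact le_rfl

lemma range_stab (T : U →L[ℝ] U) {n : ℕ}
    (h : LinearMap.range ((T ^ n : U →L[ℝ] U) : U →ₗ[ℝ] U) ≤ LinearMap.range ((T ^ (n + 1) : U →L[ℝ] U) : U →ₗ[ℝ] U)) {m k : ℕ}
    (hm : n ≤ m) (hk : m ≤ k) : LinearMap.range ((T ^ m : U →L[ℝ] U) : U →ₗ[ℝ] U) ≤ LinearMap.range ((T ^ k : U →L[ℝ] U) : U →ₗ[ℝ] U) := by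
  have step : ∀ m, n ≤ m → LinearMap.range ((T ^ m : U →L[ℝ] U) : U →ₗ[ℝ] U) ≤ LinearMap.range ((T ^ (m + 1) : U →L[ℝ] U) : U →ₗ[ℝ] U) := by
    intro m hm u hu
    obtain ⟨y, rfl⟩ := hu
    have h1 : (T ^ n) y ∈ LinearMap.range ((T ^ (n + 1) : U →L[ℝ] U) : U →ₗ[ℝ] U) := h ⟨y, rfl⟩
    obtain ⟨w, hw⟩ := h1
    refine ⟨w, ?_⟩
    show (T ^ (m + 1)) w = (T ^ m) y
    calc (T ^ (m + 1)) w = (T ^ (m - n)) ((T ^ (n + 1)) w) := by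
          rw [← ContinuousLinearMap.mul_apply, ← pow_add]
          congr 2
          omega
      _ = (T ^ (m - n)) ((T ^ n) y) := by rw [← hw]; rfl
      _ = (T ^ m) y := by
          rw [← ContinuousLinearMap.mul_apply, ← pow_add]
          congr 2
          omega
  induction k with
  | zero =>
    have : m = 0 := by omega
    subst this; exact le_rfl
  | succ k ih =>
    rcases Nat.lt_or_ge m (k+1) with hlt | hge
    · exact le_trans (ih (by omega)) (step k (by omega))
    · have : m = k + 1 := by omega
      subst this; exact le_rfl

theorem stmt1' {U : Type*} [NormedAddCommGroup U] [NormedSpace ℝ U] [CompleteSpace U]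
    (K : U →L[ℝ] U) (hK2 : IsCompactOperator fun u => K (K u)) :
    FiniteDimensional ℝ (LinearMap.ker ((1 - K : U →L[ℝ] U) : U →ₗ[ℝ] U)) ∧
    IsClosed (LinearMap.range ((1 - K : U →L[ℝ] U) : U →ₗ[ℝ] U) : Set U) ∧
    FiniteDimensional ℝ (U ⧸ LinearMap.range ((1 - K : U →L[ℝ] U) : U →ₗ[ℝ] U)) ∧
    Module.finrank ℝ (LinearMap.ker ((1 - K : U →L[ℝ] U) : U →ₗ[ℝ] U))
      = Module.finrank ℝ (U ⧸ LinearMap.range ((1 - K : U →L[ℝ] U) : U →ₗ[ℝ] U)) := by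
  have hKK : IsCompactOperator ⇑(K * K) := hK2
  set T : U →L[ℝ] U := 1 - K with hT
  haveI hkerfd : FiniteDimensional ℝ (LinearMap.ker (T : U →ₗ[ℝ] U)) := ker_fd_of_sq_compact K hKK
  have hrcl : IsClosed (LinearMap.range (T : U →ₗ[ℝ] U) : Set U) := range_closed_of_sq_compact K hKK
  obtain ⟨a, ha⟩ := ascent K hK2
  obtain ⟨d, hd⟩ := descent K hK2
  set n : ℕ := max a d + 1 with hn
  set N : Submodule ℝ U := LinearMap.ker ((T ^ n : U →L[ℝ] U) : U →ₗ[ℝ] U) with hN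
  haveI hNfd : FiniteDimensional ℝ N := by
    obtain ⟨C, hfac, hC⟩ := pow_form K hK2 n
    rw [hN, hT, hfac]
    exact ker_fd_of_sq_compact C hC
  -- basic facts
  have hker2n : LinearMap.ker ((T ^ (2 * n) : U →L[ℝ] U) : U →ₗ[ℝ] U) ≤ N :=
    ker_stab T ha (by omega) (by omega)
  have hrange2n : LinearMap.range ((T ^ n : U →L[ℝ] U) : U →ₗ[ℝ] U) ≤ LinearMap.range ((T ^ (2 * n) : U →L[ℝ] U) : U →ₗ[ℝ] U) :=
    range_stab T hd (by omega) (by omega)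
  have hkerT_le : LinearMap.ker (T : U →ₗ[ℝ] U) ≤ N := by
    have := ker_pow_mono T (show 1 ≤ n by omega)
    rwa [pow_one] at this
  have hrange_le : LinearMap.range ((T ^ n : U →L[ℝ] U) : U →ₗ[ℝ] U) ≤ LinearMap.range (T : U →ₗ[ℝ] U) := by
    have := range_pow_anti T (show 1 ≤ n by omega)
    rwa [pow_one] at this
  -- disjointness
  have hdisj : N ⊓ LinearMap.range ((T ^ n : U →L[ℝ] U) : U →ₗ[ℝ] U) = ⊥ := by
    rw [eq_bot_iff]
    rintro u ⟨hu1, v, rfl⟩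
    have h2n : (T ^ (2 * n)) v = 0 := by
      have : (T ^ n) ((T ^ n) v) = 0 := hu1
      rwa [← ContinuousLinearMap.mul_apply, ← pow_add, show n + n = 2 * n by omega] at this
    have : v ∈ N := hker2n h2n
    show (T ^ n) v ∈ (⊥ : Submodule ℝ U)
    exact (Submodule.mem_bot ℝ).mpr this
  -- quasi-complementarity
  have hsup : ∀ u : U, ∃ w : U, u - (T ^ n) w ∈ N := by
    intro u
    obtain ⟨w, hw⟩ := hrange2n ⟨u, rfl⟩
    refine ⟨w, ?_⟩
    show (T ^ n) (u - (T ^ n) w) = 0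
    rw [map_sub]
    have : (T ^ n) ((T ^ n) w) = (T ^ (2*n)) w := by
      rw [← ContinuousLinearMap.mul_apply, ← pow_add, show n + n = 2 * n by omega]
    rw [this]; exact sub_eq_zero.mpr hw.symm
  -- T-invariance of N
  have hinv : ∀ x ∈ N, T x ∈ N := by
    intro x hx
    show (T ^ n) (T x) = 0
    have : (T ^ n) * T = T * (T ^ n) := (Commute.pow_left rfl n).eq
    rw [← ContinuousLinearMap.mul_apply, this, ContinuousLinearMap.mul_apply,
      show (T ^ n) x = 0 from hx, map_zero]
  -- N ⊓ range T = T(N)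
  have hNcap : N ⊓ LinearMap.range (T : U →ₗ[ℝ] U) = Submodule.map (T : U →ₗ[ℝ] U) N := by
    apply le_antisymm
    · rintro x ⟨hxN, v, rfl⟩
      obtain ⟨w, hw⟩ := hsup v
      set b := v - (T ^ n) w with hb
      have hbN : b ∈ N := hw
      have hTn1 : (T ^ (n+1)) w = T ((T ^ n) w) := by
        rw [pow_succ']; rfl
      have hsplit : T v = T b + (T ^ (n+1)) w := by
        rw [hTn1, hb, map_sub]; abel
      have hmem : (T ^ (n+1)) w ∈ N ⊓ LinearMap.range ((T ^ n : U →L[ℝ] U) : U →ₗ[ℝ] U) := by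
        constructor
        · have h1 : T v ∈ N := hxN
          have h2 : T b ∈ N := hinv b hbN
          have : (T ^ (n+1)) w = T v - T b := by rw [hsplit]; abel
          rw [this]
          exact N.sub_mem h1 h2
        · exact range_pow_anti T (Nat.le_succ n) ⟨w, rfl⟩
      rw [hdisj] at hmem
      have hz : (T ^ (n+1)) w = 0 := hmem
      refine ⟨b, hbN, ?_⟩
      show T b = T v
      rw [hsplit, hz, add_zero]
    · rintro x ⟨v, hv, rfl⟩
      exact ⟨hinv v hv, ⟨v, rfl⟩⟩
  -- the quotient map restricted to N
  set φ : N →ₗ[ℝ] (U ⧸ LinearMap.range (T : U →ₗ[ℝ] U)) :=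
    (LinearMap.range (T : U →ₗ[ℝ] U)).mkQ.comp N.subtype with hφ
  have hsurj : Function.Surjective φ := by
    intro c
    obtain ⟨u, rfl⟩ := Submodule.mkQ_surjective _ c
    obtain ⟨w, hw⟩ := hsup u
    refine ⟨⟨u - (T ^ n) w, hw⟩, ?_⟩
    show (LinearMap.range (T : U →ₗ[ℝ] U)).mkQ (u - (T ^ n) w) = (LinearMap.range (T : U →ₗ[ℝ] U)).mkQ u
    have hd2 : (u - (T ^ n) w) - u = -((T ^ n) w) := by abel
    rw [Submodule.mkQ_apply, Submodule.mkQ_apply, Submodule.Quotient.eq, hd2]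
    exact Submodule.neg_mem _ (hrange_le ⟨w, rfl⟩)
  haveI hQfd : FiniteDimensional ℝ (U ⧸ LinearMap.range (T : U →ₗ[ℝ] U)) :=
    Module.Finite.of_surjective φ hsurj
  have hmaple : Submodule.map (T : U →ₗ[ℝ] U) N ≤ N := by
    rintro x ⟨v, hv, rfl⟩
    exact hinv v hv
  have h1 : finrank ℝ (LinearMap.range φ) + finrank ℝ (LinearMap.ker φ) = finrank ℝ N :=
    LinearMap.finrank_range_add_finrank_ker φ
  have hrphi : LinearMap.range φ = ⊤ := LinearMap.range_eq_top.mpr hsurj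
  rw [hrphi, finrank_top] at h1
  have hkerφ : LinearMap.ker φ = Submodule.comap N.subtype (Submodule.map (T : U →ₗ[ℝ] U) N) := by
    rw [hφ, LinearMap.ker_comp, Submodule.ker_mkQ, ← hNcap, Submodule.comap_inf,
      Submodule.comap_subtype_self, top_inf_eq]
  have hk1 : finrank ℝ (LinearMap.ker φ) = finrank ℝ (Submodule.map (T : U →ₗ[ℝ] U) N) := by
    rw [hkerφ]
    exact (Submodule.comapSubtypeEquivOfLe hmaple).finrank_eq
  set ψ : N →ₗ[ℝ] U := (T : U →ₗ[ℝ] U).comp N.subtype with hψ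
  have h2 : finrank ℝ (LinearMap.range ψ) + finrank ℝ (LinearMap.ker ψ) = finrank ℝ N :=
    LinearMap.finrank_range_add_finrank_ker ψ
  have hrψ : LinearMap.range ψ = Submodule.map (T : U →ₗ[ℝ] U) N := by
    rw [hψ, LinearMap.range_comp, Submodule.range_subtype]
  have hkψ : LinearMap.ker ψ = Submodule.comap N.subtype (LinearMap.ker (T : U →ₗ[ℝ] U)) := by
    rw [hψ, LinearMap.ker_comp]
  have hk2 : finrank ℝ (LinearMap.ker ψ) = finrank ℝ (LinearMap.ker (T : U →ₗ[ℝ] U)) := by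
    rw [hkψ]
    exact (Submodule.comapSubtypeEquivOfLe hkerT_le).finrank_eq
  rw [hrψ, hk2] at h2
  rw [hk1] at h1
  refine ⟨hkerfd, hrcl, hQfd, ?_⟩
  omega


end NikolskiiAux

/-- Nikolskii's criterion: if `K² ` is compact then `I - K` is Fredholm of index zero. -/
theorem stmt1 {U : Type*} [NormedAddCommGroup U] [NormedSpace ℝ U] [CompleteSpace U]
    (K : U →L[ℝ] U) (hK2 : IsCompactOperator fun u => K (K u)) :
    IsFredholmIdxZero (ContinuousLinearMap.id ℝ U - K) := by
  have hid : ContinuousLinearMap.id ℝ U - K = 1 - K := by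
    rw [ContinuousLinearMap.one_def]
  rw [IsFredholmIdxZero, hid]
  exact stmt1' K hK2
end

section
/- Let Ψ ∈ C¹(ℝ) with Ψ not C², satisfying Ψ(t+2) = −Ψ(t) for all t. Define u⁰(t,x) := (1/8)∫₀ˣ (Ψ(4t+y) + Ψ(4t−y)) dy on ℝ × [0,1]. Then u⁰ is C², satisfies the wave equation ∂ₜ²u⁰ = 16 ∂ₓ²u⁰, the boundary conditions u⁰(t,0) = 0 and ∂ₓu⁰(t,1) = 0, is 1-periodic in t, but ∂ₜ³u⁰ does not exist. -/
/-- Counterexample (Remark `countereq`): with `Ψ` C¹ but not C² and `Ψ(t+2) = −Ψ(t)`,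
the function `u⁰(t,x) = (1/8)∫₀ˣ (Ψ(4t+y)+Ψ(4t−y)) dy` is a C², 1-periodic-in-time
solution of `∂ₜ²u = 16 ∂ₓ²u` with `u(t,0) = ∂ₓu(t,1) = 0`, but is not C³. -/
theorem stmt8 (Ψ : ℝ → ℝ) (hΨ1 : ContDiff ℝ 1 Ψ) (hΨ2 : ¬ ContDiff ℝ 2 Ψ)
    (hanti : ∀ t, Ψ (t + 2) = - Ψ t)
    (u0 : ℝ → ℝ → ℝ)
    (hu0 : ∀ t x, u0 t x = (1/8) * ∫ y in (0:ℝ)..x, (Ψ (4*t + y) + Ψ (4*t - y))) :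
    ContDiff ℝ 2 (fun p : ℝ × ℝ => u0 p.1 p.2) ∧
    (∀ t x : ℝ, deriv (fun s => deriv (fun r => u0 r x) s) t
      = 16 * deriv (fun y => deriv (fun z => u0 t z) y) x) ∧
    (∀ t : ℝ, u0 t 0 = 0) ∧
    (∀ t : ℝ, deriv (fun x => u0 t x) 1 = 0) ∧
    (∀ t x : ℝ, u0 (t + 1) x = u0 t x) ∧
    ¬ ContDiff ℝ 3 (fun p : ℝ × ℝ => u0 p.1 p.2) := by
  have hΨc : Continuous Ψ := hΨ1.continuous
  have hΨd : Differentiable ℝ Ψ := hΨ1.differentiable one_ne_zero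
  set F : ℝ → ℝ := fun z => ∫ y in (0:ℝ)..z, Ψ y with hFdef
  have hF : ∀ z, HasDerivAt F (Ψ z) z := fun z =>
    (hΨc.integral_hasStrictDerivAt 0 z).hasDerivAt
  have hderivF : deriv F = Ψ := funext fun z => (hF z).deriv
  have hFdiff : Differentiable ℝ F := fun z => (hF z).differentiableAt
  have hFC2 : ContDiff ℝ 2 F := by
    rw [show (2 : WithTop ℕ∞) = 1 + 1 from rfl, contDiff_succ_iff_deriv]
    refine ⟨hFdiff, by simp, ?_⟩
    rw [hderivF]; exact hΨ1
  -- key closed form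
  have key : ∀ t x, u0 t x = (F (4*t + x) - F (4*t - x)) / 8 := by
    intro t x
    have i1 : (∫ y in (0:ℝ)..x, Ψ (4*t + y)) = F (4*t + x) - F (4*t) := by
      rw [intervalIntegral.integral_comp_add_left Ψ (4*t)]
      have := intervalIntegral.integral_add_adjacent_intervals
        (hΨc.intervalIntegrable (μ := MeasureTheory.volume) 0 (4*t)) (hΨc.intervalIntegrable (μ := MeasureTheory.volume) (4*t) (4*t+x))
      simp only [hFdef, add_zero]
      linarith [this]
    have i2 : (∫ y in (0:ℝ)..x, Ψ (4*t - y)) = F (4*t) - F (4*t - x) := by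
      rw [intervalIntegral.integral_comp_sub_left Ψ (4*t)]
      have := intervalIntegral.integral_add_adjacent_intervals
        (hΨc.intervalIntegrable (μ := MeasureTheory.volume) 0 (4*t-x)) (hΨc.intervalIntegrable (μ := MeasureTheory.volume) (4*t-x) (4*t))
      simp only [hFdef, sub_zero]
      linarith [this]
    have ia : IntervalIntegrable (fun y => Ψ (4*t + y)) MeasureTheory.volume 0 x :=
      Continuous.intervalIntegrable (by continuity) 0 x
    have ib : IntervalIntegrable (fun y => Ψ (4*t - y)) MeasureTheory.volume 0 x :=
      Continuous.intervalIntegrable (by continuity) 0 x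
    rw [hu0, intervalIntegral.integral_add ia ib, i1, i2]
    ring
  -- spatial derivative
  have hdx : ∀ t x, HasDerivAt (fun z => u0 t z) ((Ψ (4*t + x) + Ψ (4*t - x)) / 8) x := by
    intro t x
    have h1 : HasDerivAt (fun z : ℝ => F (4*t + z)) (Ψ (4*t + x)) x := by
      have := (hF (4*t + x)).comp x ((hasDerivAt_const x (4*t)).add (hasDerivAt_id x))
      simpa [Function.comp_def] using this
    have h2 : HasDerivAt (fun z : ℝ => F (4*t - z)) (-Ψ (4*t - x)) x := by
      have := (hF (4*t - x)).comp x ((hasDerivAt_const x (4*t)).sub (hasDerivAt_id x))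
      simpa [Function.comp_def] using this
    have := (h1.sub h2).div_const 8
    simp only [key]
    exact this.congr_deriv (by ring)
  -- time derivative
  have hdt : ∀ t x, HasDerivAt (fun r => u0 r x) ((Ψ (4*t + x) - Ψ (4*t - x)) / 2) t := by
    intro t x
    have h1 : HasDerivAt (fun r : ℝ => F (4*r + x)) (Ψ (4*t + x) * 4) t := by
      have := (hF (4*t + x)).comp t
        (((hasDerivAt_id t).const_mul 4).add_const x)
      simpa [Function.comp_def] using this
    have h2 : HasDerivAt (fun r : ℝ => F (4*r - x)) (Ψ (4*t - x) * 4) t := by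
      have := (hF (4*t - x)).comp t
        (((hasDerivAt_id t).const_mul 4).sub_const x)
      simpa [Function.comp_def] using this
    have := (h1.sub h2).div_const 8
    simp only [key]
    exact this.congr_deriv (by ring)
  refine ⟨?_, ?_, ?_, ?_, ?_, ?_⟩
  · -- C²
    have : (fun p : ℝ × ℝ => u0 p.1 p.2)
        = fun p : ℝ × ℝ => (F (4*p.1 + p.2) - F (4*p.1 - p.2)) / 8 := by
      funext p; exact key p.1 p.2
    rw [this]
    have l1 : ContDiff ℝ 2 (fun p : ℝ × ℝ => 4*p.1 + p.2) :=
      (contDiff_const.mul contDiff_fst).add contDiff_snd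
    have l2 : ContDiff ℝ 2 (fun p : ℝ × ℝ => 4*p.1 - p.2) :=
      (contDiff_const.mul contDiff_fst).sub contDiff_snd
    exact ((hFC2.comp l1).sub (hFC2.comp l2)).div_const 8
  · -- wave equation
    intro t x
    have e1 : (fun s => deriv (fun r => u0 r x) s)
        = fun s => (Ψ (4*s + x) - Ψ (4*s - x)) / 2 := by
      funext s; exact (hdt s x).deriv
    have e2 : (fun y => deriv (fun z => u0 t z) y)
        = fun y => (Ψ (4*t + y) + Ψ (4*t - y)) / 8 := by
      funext y; exact (hdx t y).deriv
    rw [e1, e2]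
    have d1 : ∀ z : ℝ, HasDerivAt Ψ (deriv Ψ z) z := fun z => (hΨd z).hasDerivAt
    have h1 : HasDerivAt (fun s : ℝ => Ψ (4*s + x)) (deriv Ψ (4*t + x) * 4) t := by
      have := (d1 (4*t + x)).comp t (((hasDerivAt_id t).const_mul 4).add_const x)
      simpa [Function.comp_def] using this
    have h2 : HasDerivAt (fun s : ℝ => Ψ (4*s - x)) (deriv Ψ (4*t - x) * 4) t := by
      have := (d1 (4*t - x)).comp t (((hasDerivAt_id t).const_mul 4).sub_const x)
      simpa [Function.comp_def] using this
    have h3 : HasDerivAt (fun y : ℝ => Ψ (4*t + y)) (deriv Ψ (4*t + x)) x := by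
      have := (d1 (4*t + x)).comp x ((hasDerivAt_const x (4*t)).add (hasDerivAt_id x))
      simpa [Function.comp_def] using this
    have h4 : HasDerivAt (fun y : ℝ => Ψ (4*t - y)) (-deriv Ψ (4*t - x)) x := by
      have := (d1 (4*t - x)).comp x ((hasDerivAt_const x (4*t)).sub (hasDerivAt_id x))
      simpa [Function.comp_def] using this
    rw [HasDerivAt.deriv (f := fun s => (Ψ (4*s + x) - Ψ (4*s - x)) / 2) ((h1.sub h2).div_const 2), HasDerivAt.deriv (f := fun y => (Ψ (4*t + y) + Ψ (4*t - y)) / 8) ((h3.add h4).div_const 8)]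
    ring
  · -- u0 t 0 = 0
    intro t; rw [hu0]; simp
  · -- Neumann at x = 1
    intro t
    rw [(hdx t 1).deriv]
    have : Ψ (4*t + 1) = - Ψ (4*t - 1) := by
      have := hanti (4*t - 1)
      rw [show 4*t - 1 + 2 = 4*t + 1 by ring] at this
      exact this
    rw [this]; ring
  · -- 1-periodicity
    intro t x
    have hper : ∀ z, Ψ (z + 4) = Ψ z := by
      intro z
      have h1 := hanti z
      have h2 := hanti (z + 2)
      rw [show z + 2 + 2 = z + 4 by ring] at h2
      rw [h2, h1, neg_neg]
    rw [hu0, hu0]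
    congr 1
    apply intervalIntegral.integral_congr
    intro y _
    dsimp only
    have e1 : 4*(t+1) + y = (4*t + y) + 4 := by ring
    have e2 : 4*(t+1) - y = (4*t - y) + 4 := by ring
    rw [e1, e2, hper, hper]
  · -- not C³
    intro h3
    have hFeq : F = fun s => 8 * u0 (s/8) (s/2) + F 0 := by
      funext s
      rw [key, show 4*(s/8) + s/2 = s by ring, show 4*(s/8) - s/2 = 0 by ring]
      ring
    have hFC3 : ContDiff ℝ 3 F := by
      rw [hFeq]
      have lin : ContDiff ℝ 3 (fun s : ℝ => ((s/8 : ℝ), (s/2 : ℝ))) :=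
        (contDiff_id.div_const 8).prodMk (contDiff_id.div_const 2)
      exact (contDiff_const.mul (h3.comp lin)).add contDiff_const
    have : ContDiff ℝ 2 (deriv F) := by
      rw [show (3 : WithTop ℕ∞) = 2 + 1 from rfl, contDiff_succ_iff_deriv] at hFC3
      exact hFC3.2.2
    rw [hderivF] at this
    exact hΨ2 this
end

section
/- Let a ∈ C¹([0,1]) be nowhere zero and let v ∈ C¹ be a pair of functions v₁, v₂ : ℝ×[0,1] → ℝ, 1-periodic in t, T > 0, ε ≥ 0, g₁ ∈ C²(ℝ) 1-periodic, satisfying v₁(t,0)+v₂(t,0) = (2ε/T)g₁′(t) and the transport equations (1/T)∂ₜv₁ − a∂ₓv₁ + 𝓑 = εf and (1/T)∂ₜv₂ + a∂ₓv₂ + 𝓑 = εf (for the same function 𝓑 and f). Define u(t,x) := εg₁(t) + ½∫₀ˣ (v₁(t,y) − v₂(t,y))/a(y) dy. Then ∂ₜu(t,x) = (T/2)(v₁(t,x) + v₂(t,x)) for all (t,x). -/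
open intervalIntegral MeasureTheory Metric

/-- Key computation of Lemma `lem:FOS`(ii): for `u(t,x) = εg₁(t) + ½∫₀ˣ (v₁−v₂)/a dy`,
one has `∂ₜu = (T/2)(v₁+v₂)`. -/
theorem stmt19 (a : ℝ → ℝ) (ha : ContDiff ℝ 1 a) (ha0 : ∀ x : ℝ, a x ≠ 0)
    (T ε : ℝ) (hT : 0 < T) (hε : 0 ≤ ε)
    (g1 : ℝ → ℝ) (hg1 : ContDiff ℝ 2 g1) (hg1p : Function.Periodic g1 1)
    (v1 v2 : ℝ → ℝ → ℝ)
    (hv1 : ContDiff ℝ 1 (Function.uncurry v1)) (hv2 : ContDiff ℝ 1 (Function.uncurry v2))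
    (hv1p : ∀ t x, v1 (t + 1) x = v1 t x) (hv2p : ∀ t x, v2 (t + 1) x = v2 t x)
    (B f : ℝ → ℝ → ℝ)
    (hbc : ∀ t, v1 t 0 + v2 t 0 = (2 * ε / T) * deriv g1 t)
    (heq1 : ∀ t x, (1/T) * deriv (fun s => v1 s x) t
      - a x * deriv (fun y => v1 t y) x + B t x = ε * f t x)
    (heq2 : ∀ t x, (1/T) * deriv (fun s => v2 s x) t
      + a x * deriv (fun y => v2 t y) x + B t x = ε * f t x)
    (u : ℝ → ℝ → ℝ)
    (hu : ∀ t x, u t x = ε * g1 t + (1/2) * ∫ y in (0:ℝ)..x, (v1 t y - v2 t y) / a y) :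
    ∀ t x : ℝ, deriv (fun s => u s x) t = (T/2) * (v1 t x + v2 t x) := by
  -- partial derivatives
  set d1 : ℝ × ℝ → ℝ := fun p => fderiv ℝ (Function.uncurry v1) p (1, 0) with hd1
  set d2 : ℝ × ℝ → ℝ := fun p => fderiv ℝ (Function.uncurry v2) p (1, 0) with hd2
  set e1 : ℝ × ℝ → ℝ := fun p => fderiv ℝ (Function.uncurry v1) p (0, 1) with he1
  set e2 : ℝ × ℝ → ℝ := fun p => fderiv ℝ (Function.uncurry v2) p (0, 1) with he2
  have hv1d := hv1.differentiable one_ne_zero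
  have hv2d := hv2.differentiable one_ne_zero
  have key1 : ∀ s y : ℝ, HasDerivAt (fun s' => v1 s' y) (d1 (s, y)) s := by
    intro s y
    have h := ((hv1d (s, y)).hasFDerivAt).comp_hasDerivAt s
      (HasDerivAt.prodMk (hasDerivAt_id s) (hasDerivAt_const s y))
    exact h
  have key2 : ∀ s y : ℝ, HasDerivAt (fun s' => v2 s' y) (d2 (s, y)) s := by
    intro s y
    exact ((hv2d (s, y)).hasFDerivAt).comp_hasDerivAt s
      (HasDerivAt.prodMk (hasDerivAt_id s) (hasDerivAt_const s y))
  have keyx1 : ∀ s y : ℝ, HasDerivAt (fun y' => v1 s y') (e1 (s, y)) y := by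
    intro s y
    exact ((hv1d (s, y)).hasFDerivAt).comp_hasDerivAt y
      (HasDerivAt.prodMk (hasDerivAt_const y s) (hasDerivAt_id y))
  have keyx2 : ∀ s y : ℝ, HasDerivAt (fun y' => v2 s y') (e2 (s, y)) y := by
    intro s y
    exact ((hv2d (s, y)).hasFDerivAt).comp_hasDerivAt y
      (HasDerivAt.prodMk (hasDerivAt_const y s) (hasDerivAt_id y))
  -- continuity of derivatives
  have hc1 : Continuous d1 := (hv1.continuous_fderiv one_ne_zero).clm_apply continuous_const
  have hc2 : Continuous d2 := (hv2.continuous_fderiv one_ne_zero).clm_apply continuous_const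
  have hce1 : Continuous e1 := (hv1.continuous_fderiv one_ne_zero).clm_apply continuous_const
  have hce2 : Continuous e2 := (hv2.continuous_fderiv one_ne_zero).clm_apply continuous_const
  have hac : Continuous a := ha.continuous
  -- the key PDE identity: (d1 - d2)/a = T*(e1 + e2)
  have hpde : ∀ s y : ℝ, (d1 (s, y) - d2 (s, y)) / a y = T * (e1 (s, y) + e2 (s, y)) := by
    intro s y
    have h1 := heq1 s y
    have h2 := heq2 s y
    rw [(key1 s y).deriv, (keyx1 s y).deriv] at h1
    rw [(key2 s y).deriv, (keyx2 s y).deriv] at h2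
    have hsub : (1/T) * (d1 (s, y) - d2 (s, y)) = a y * (e1 (s, y) + e2 (s, y)) := by
      nlinarith [h1, h2]
    have hT' : T ≠ 0 := ne_of_gt hT
    have h5 : d1 (s, y) - d2 (s, y) = T * (a y * (e1 (s, y) + e2 (s, y))) := by
      calc d1 (s, y) - d2 (s, y) = T * ((1/T) * (d1 (s, y) - d2 (s, y))) := by
            field_simp
        _ = T * (a y * (e1 (s, y) + e2 (s, y))) := by rw [hsub]
    rw [div_eq_iff (ha0 y), h5]
    ring
  intro t x
  -- F and F'
  set F : ℝ → ℝ → ℝ := fun s y => (v1 s y - v2 s y) / a y with hF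
  set F' : ℝ → ℝ → ℝ := fun s y => (d1 (s, y) - d2 (s, y)) / a y with hF'
  have hFc : Continuous (fun p : ℝ × ℝ => F p.1 p.2) := by
    apply Continuous.div
    · exact (hv1.continuous.sub hv2.continuous)
    · exact hac.comp continuous_snd
    · exact fun p => ha0 p.2
  have hF'c : Continuous (fun p : ℝ × ℝ => F' p.1 p.2) := by
    apply Continuous.div
    · exact (hc1.sub hc2)
    · exact hac.comp continuous_snd
    · exact fun p => ha0 p.2
  -- bound on compact set
  obtain ⟨C, hC⟩ : ∃ C : ℝ, ∀ p ∈ (closedBall t 1 ×ˢ Set.uIcc (0:ℝ) x),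
      ‖F' p.1 p.2‖ ≤ C := by
    have hK : IsCompact (closedBall t 1 ×ˢ Set.uIcc (0:ℝ) x) :=
      (isCompact_closedBall t 1).prod isCompact_uIcc
    obtain ⟨C, hC⟩ := hK.exists_bound_of_continuousOn hF'c.continuousOn
    exact ⟨C, hC⟩
  -- differentiate under the integral
  have hmain : HasDerivAt (fun s => ∫ y in (0:ℝ)..x, F s y) (∫ y in (0:ℝ)..x, F' t y) t := by
    have := intervalIntegral.hasDerivAt_integral_of_dominated_loc_of_deriv_le
      (F := F) (F' := F') (x₀ := t) (a := (0:ℝ)) (b := x) (bound := fun _ => C)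
      (μ := MeasureTheory.volume) (ball_mem_nhds t one_pos)
      (Filter.Eventually.of_forall fun s =>
        ((hFc.comp (continuous_const.prodMk continuous_id)).aestronglyMeasurable :
          AEStronglyMeasurable (F s) _))
      ((hFc.comp (continuous_const.prodMk continuous_id)).intervalIntegrable 0 x)
      ((hF'c.comp (continuous_const.prodMk continuous_id)).aestronglyMeasurable)
      (Filter.Eventually.of_forall fun y hy s hs => by
        exact hC (s, y) ⟨ball_subset_closedBall hs, Set.uIoc_subset_uIcc hy⟩)
      (intervalIntegrable_const)
      (Filter.Eventually.of_forall fun y _ s _ => by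
        have h1 := key1 s y
        have h2 := key2 s y
        exact (h1.sub h2).div_const (a y))
    exact this.2
  -- compute the integral of F' t
  have hInt : (∫ y in (0:ℝ)..x, F' t y) = T * ((v1 t x + v2 t x) - (v1 t 0 + v2 t 0)) := by
    have : (∫ y in (0:ℝ)..x, F' t y) = ∫ y in (0:ℝ)..x, T * (e1 (t, y) + e2 (t, y)) := by
      apply intervalIntegral.integral_congr
      intro y _
      exact hpde t y
    rw [this]
    have hftc : (∫ y in (0:ℝ)..x, (e1 (t, y) + e2 (t, y))) =
        (v1 t x + v2 t x) - (v1 t 0 + v2 t 0) := by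
      apply intervalIntegral.integral_eq_sub_of_hasDerivAt
      · intro y _
        exact (keyx1 t y).add (keyx2 t y)
      · exact (((hce1.comp (continuous_const.prodMk continuous_id)).add
          (hce2.comp (continuous_const.prodMk continuous_id))).intervalIntegrable 0 x)
    rw [intervalIntegral.integral_const_mul, hftc]
  -- assemble
  have hg1d : HasDerivAt g1 (deriv g1 t) t :=
    ((hg1.differentiable (by norm_num)) t).hasDerivAt
  have hutotal : HasDerivAt (fun s => u s x)
      (ε * deriv g1 t + (1/2) * (T * ((v1 t x + v2 t x) - (v1 t 0 + v2 t 0)))) t := by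
    have : (fun s => u s x) = fun s => ε * g1 s + (1/2) * ∫ y in (0:ℝ)..x, F s y :=
      funext fun s => hu s x
    rw [this]
    have := (hg1d.const_mul ε).add (hmain.const_mul (1/2 : ℝ))
    rwa [hInt] at this
  rw [hutotal.deriv, hbc t]
  have hT' : T ≠ 0 := ne_of_gt hT
  field_simp
  ring
end
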